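/- arXiv:2306.06444 — 2 statements merged into one kernel-verified Lean document; each statement's English description precedes it below -/
import Mathlib

section
/- Let {P_n}_{n≥0} be a monic PS satisfying the three-term recurrence with coefficients (β_n), (γ_{n+1}), let Q_n := (n+1)^{-1} D_ω P_{n+1}, and suppose {Q_n}_{n≥0} satisfies the three-term recurrence with coefficients (β̃_n), (γ̃_{n+1}). Then the following equations hold: (1) (n+2)β̃_n − nβ̃_{n−1} = (n+1)β_{n+1} − (n−1)β_n − ω for all n ≥ 1; (2) 2β̃_0 = β_1 + β_0 − ω; (3) (n+3)γ̃_{n+1} − (n+1)γ̃_n = (n+1)γ_{n+2} − (n−1)γ_{n+1} + (n+1)(β_{n+1} − β̃_n)(β_{n+1} − β̃_n − ω) for all n ≥ 1; (4) 3γ̃_1 = γ_2 + γ_1 + (β_1 − β̃_0)(β_1 − β̃_0 − ω); (5) (n+1)γ̃_n(2β_{n+1} − β̃_n − β̃_{n−1} − ω) − nγ_{n+1}(β_{n+1} + β_n − 2β̃_{n−1} − ω) = 0 for all n ≥ 1; (6) (n+2)γ̃_n γ̃_{n+1} − 2(n+1)γ̃_n γ_{n+2} + nγ_{n+1}γ_{n+2}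 = 0 for all n ≥ 1. -/
open Polynomial

/-- The Hahn difference operator `D_ω` acting on polynomials:
`(D_ω f)(x) = (f(x+ω) − f(x))/ω`. -/
noncomputable def Dw (ω : ℂ) (f : Polynomial ℂ) : Polynomial ℂ :=
  C ω⁻¹ * (f.comp (X + C ω) - f)

/-- A monic polynomial sequence: each `P n` is monic of degree `n`. -/
def MonicPS (P : ℕ → Polynomial ℂ) : Prop :=
  ∀ n, (P n).Monic ∧ (P n).natDegree = n

/-- Three-term recurrence with coefficients `β`, `γ` (where `γ (n+1)` is used). -/
def TTR (P : ℕ → Polynomial ℂ) (β γ : ℕ → ℂ) : Prop :=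
  P 0 = 1 ∧ P 1 = X - C (β 0) ∧
    ∀ n : ℕ, P (n + 2) = (X - C (β (n + 1))) * P (n + 1) - C (γ (n + 1)) * P n

/-- Orthogonality of a polynomial sequence with respect to a linear functional. -/
def IsOPSwrt (P : ℕ → Polynomial ℂ) (u : Polynomial ℂ →ₗ[ℂ] ℂ) : Prop :=
  (∀ n m, n ≠ m → u (P n * P m) = 0) ∧ ∀ n, u (P n * P n) ≠ 0

lemma Dw_sub (ω : ℂ) (f g : ℂ[X]) : Dw ω (f - g) = Dw ω f - Dw ω g := by
  simp only [Dw, sub_comp]; ring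

lemma Dw_C_mul (ω c : ℂ) (f : ℂ[X]) : Dw ω (C c * f) = C c * Dw ω f := by
  simp only [Dw, mul_comp, C_comp]; ring

lemma Dw_mul (ω : ℂ) (f g : ℂ[X]) :
    Dw ω (f * g) = f.comp (X + C ω) * Dw ω g + Dw ω f * g := by
  simp only [Dw, mul_comp]; ring

lemma Dw_one (ω : ℂ) : Dw ω 1 = 0 := by simp [Dw]

lemma Dw_X_sub_C (ω : ℂ) (hω : ω ≠ 0) (b : ℂ) : Dw ω (X - C b) = 1 := by
  simp only [Dw, sub_comp, X_comp, C_comp]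
  rw [show X + C ω - C b - (X - C b) = C ω by ring, ← C_mul, inv_mul_cancel₀ hω, C_1]

lemma ttr_monic {Q : ℕ → ℂ[X]} {tβ tγ : ℕ → ℂ} (h : TTR Q tβ tγ) : MonicPS Q := by
  intro n
  induction n using Nat.strong_induction_on with
  | _ n ih =>
    match n with
    | 0 => simp [h.1, monic_one]
    | 1 => simp [h.2.1, monic_X_sub_C]
    | (k+2) =>
      have h1 := ih (k+1) (by omega)
      have h0 := ih k (by omega)
      have hm : ((X - C (tβ (k+1))) * Q (k+1)).Monic :=
        (monic_X_sub_C _).mul h1.1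
      have hd : ((X - C (tβ (k+1))) * Q (k+1)).natDegree = k + 2 := by
        rw [natDegree_mul (by exact (monic_X_sub_C _).ne_zero) h1.1.ne_zero,
          natDegree_X_sub_C, h1.2]; omega
      have hnd : (C (tγ (k+1)) * Q k).natDegree
          < ((X - C (tβ (k+1))) * Q (k+1)).natDegree := by
        have := natDegree_C_mul_le (tγ (k+1)) (Q k)
        omega
      have hq : (C (tγ (k+1)) * Q k).degree < ((X - C (tβ (k+1))) * Q (k+1)).degree := by
        apply lt_of_le_of_lt (degree_le_natDegree)
        rw [degree_eq_natDegree hm.ne_zero]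
        exact_mod_cast hnd
      constructor
      · rw [h.2.2 k]; exact hm.sub_of_left hq
      · rw [h.2.2 k, ← hd]
        exact natDegree_sub_eq_left_of_natDegree_lt hnd

lemma coeff_of_lt {Q : ℕ → ℂ[X]} (hQ : MonicPS Q) {i j : ℕ} (h : i < j) :
    (Q i).coeff j = 0 :=
  coeff_eq_zero_of_natDegree_lt (by rw [(hQ i).2]; exact h)

lemma coeff_self {Q : ℕ → ℂ[X]} (hQ : MonicPS Q) (i : ℕ) :
    (Q i).coeff i = 1 := by
  have := (hQ i).1.coeff_natDegree
  rwa [(hQ i).2] at this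

lemma indep2 {Q : ℕ → ℂ[X]} (hQ : MonicPS Q) {k : ℕ} {c1 c0 : ℂ}
    (h : C c1 * Q (k+1) + C c0 * Q k = 0) : c1 = 0 ∧ c0 = 0 := by
  have h1 := congrArg (fun p => coeff p (k+1)) h
  simp [coeff_C_mul, coeff_self hQ, coeff_of_lt hQ (Nat.lt_succ_self k)] at h1
  subst h1
  have h0 := congrArg (fun p => coeff p k) h
  simp [coeff_C_mul, coeff_self hQ] at h0
  exact ⟨rfl, h0⟩

lemma indep3 {Q : ℕ → ℂ[X]} (hQ : MonicPS Q) {k : ℕ} {c2 c1 c0 : ℂ}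
    (h : C c2 * Q (k+2) + C c1 * Q (k+1) + C c0 * Q k = 0) :
    c2 = 0 ∧ c1 = 0 ∧ c0 = 0 := by
  have h2 := congrArg (fun p => coeff p (k+2)) h
  simp [coeff_C_mul, coeff_self hQ, coeff_of_lt hQ (show k+1 < k+2 by omega),
    coeff_of_lt hQ (show k < k+2 by omega)] at h2
  subst h2
  rw [C_0, zero_mul, zero_add] at h
  exact ⟨rfl, indep2 hQ h⟩

lemma indep4 {Q : ℕ → ℂ[X]} (hQ : MonicPS Q) {k : ℕ} {c3 c2 c1 c0 : ℂ}
    (h : C c3 * Q (k+3) + C c2 * Q (k+2) + C c1 * Q (k+1) + C c0 * Q k = 0) :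
    c3 = 0 ∧ c2 = 0 ∧ c1 = 0 ∧ c0 = 0 := by
  have h3 := congrArg (fun p => coeff p (k+3)) h
  simp [coeff_C_mul, coeff_self hQ, coeff_of_lt hQ (show k+2 < k+3 by omega),
    coeff_of_lt hQ (show k+1 < k+3 by omega),
    coeff_of_lt hQ (show k < k+3 by omega)] at h3
  subst h3
  rw [C_0, zero_mul, zero_add] at h
  exact ⟨rfl, indep3 hQ h⟩

theorem main_system_for_recurrence_coefficients
    (ω : ℂ) (hω : ω ≠ 0) (P Q : ℕ → Polynomial ℂ) (hP : MonicPS P)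
    (β γ tβ tγ : ℕ → ℂ) (hPr : TTR P β γ)
    (hQ : ∀ n, Q n = ((n : ℂ) + 1)⁻¹ • Dw ω (P (n + 1)))
    (hQr : TTR Q tβ tγ) :
    (∀ n : ℕ, 1 ≤ n →
        ((n : ℂ) + 2) * tβ n - (n : ℂ) * tβ (n - 1)
          = ((n : ℂ) + 1) * β (n + 1) - ((n : ℂ) - 1) * β n - ω) ∧
    (2 * tβ 0 = β 1 + β 0 - ω) ∧
    (∀ n : ℕ, 1 ≤ n →
        ((n : ℂ) + 3) * tγ (n + 1) - ((n : ℂ) + 1) * tγ n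
          = ((n : ℂ) + 1) * γ (n + 2) - ((n : ℂ) - 1) * γ (n + 1)
            + ((n : ℂ) + 1) * (β (n + 1) - tβ n) * (β (n + 1) - tβ n - ω)) ∧
    (3 * tγ 1 = γ 2 + γ 1 + (β 1 - tβ 0) * (β 1 - tβ 0 - ω)) ∧
    (∀ n : ℕ, 1 ≤ n →
        ((n : ℂ) + 1) * tγ n * (2 * β (n + 1) - tβ n - tβ (n - 1) - ω)
          - (n : ℂ) * γ (n + 1) * (β (n + 1) + β n - 2 * tβ (n - 1) - ω) = 0) ∧
    (∀ n : ℕ, 1 ≤ n →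
        ((n : ℂ) + 2) * tγ n * tγ (n + 1) - 2 * ((n : ℂ) + 1) * tγ n * γ (n + 2)
          + (n : ℂ) * γ (n + 1) * γ (n + 2) = 0) := by
  have hQm : MonicPS Q := ttr_monic hQr
  have hd : ∀ m : ℕ, Dw ω (P (m+1)) = C ((m:ℂ)+1) * Q m := by
    intro m
    have hne : ((m:ℂ)+1) ≠ 0 := by exact_mod_cast Nat.succ_ne_zero m
    rw [hQ m, smul_eq_C_mul, ← mul_assoc, ← C_mul, mul_inv_cancel₀ hne, C_1, one_mul]
  have hK : ∀ n : ℕ, C ((n:ℂ)+2) * Q (n+1)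
      = (X + C ω - C (β (n+1))) * (C ((n:ℂ)+1) * Q n) + P (n+1)
        - C (γ (n+1)) * Dw ω (P n) := by
    intro n
    have h := congrArg (Dw ω) (hPr.2.2 n)
    rw [Dw_sub, Dw_mul, Dw_C_mul, Dw_X_sub_C ω hω, sub_comp, X_comp, C_comp,
      hd (n+1), hd n] at h
    push_cast at h
    simp only [map_sub, map_add, map_mul, map_neg, map_one, map_zero, map_ofNat, Nat.reduceAdd] at h ⊢
    linear_combination h
  have hE0 : P 1 = Q 1 + C (β 1 - tβ 0 - ω) * Q 0 := by
    have h := hK 0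
    rw [hPr.1, Dw_one, mul_zero, sub_zero] at h
    rw [hQr.1, hQr.2.1] at h ⊢
    push_cast at h
    simp only [map_sub, map_add, map_mul, map_neg, map_one, map_zero, map_ofNat, Nat.reduceAdd] at h ⊢
    linear_combination -h
  have hE : ∀ n : ℕ, P (n+2) = Q (n+2)
      + C (((n:ℂ)+2)*(β (n+2) - tβ (n+1) - ω)) * Q (n+1)
      + C (((n:ℂ)+1)*γ (n+2) - ((n:ℂ)+2)*tγ (n+1)) * Q n := by
    intro n
    have h := hK (n+1)
    rw [hd n] at h
    have hT := hQr.2.2 n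
    push_cast at h
    simp only [map_sub, map_add, map_mul, map_neg, map_one, map_zero, map_ofNat, Nat.reduceAdd] at h hT ⊢
    linear_combination -h + (C ((n:ℂ)) + 2) * hT
  have hX0 : X * Q 0 = Q 1 + C (tβ 0) * Q 0 := by
    rw [hQr.1, hQr.2.1]; ring
  have hQ0 : P 0 = Q 0 := by rw [hPr.1, hQr.1]
  -- equation (2)
  have heq2 : 2 * tβ 0 = β 1 + β 0 - ω := by
    have h := hE0
    rw [hPr.2.1, hQr.2.1, hQr.1] at h
    have h0 := congrArg (fun p => coeff p 0) h
    simp [coeff_sub, coeff_C] at h0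
    linear_combination h0
  -- level 0 identity
  have hL0 : (3*tβ 1 - tβ 0 - (2*β 2 - ω)) = 0 ∧
      (3*tγ 1 - (γ 2 + γ 1 + (β 1 - tβ 0)*(β 1 - tβ 0 - ω))) = 0 := by
    refine indep2 hQm (k := 0) ?_
    have hrec := hPr.2.2 0
    have hP2 := hE 0
    have hT0 := hQr.2.2 0
    push_cast at hP2
    simp only [map_sub, map_add, map_mul, map_neg, map_one, map_zero, map_ofNat, Nat.reduceAdd]
      at hrec hP2 hT0 hE0 hX0 hQ0 ⊢
    linear_combination -hrec + hP2 - (X - C (β 1)) * hE0 + C (γ 1) * hQ0 + hT0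
      - (C (β 1) - C (tβ 0) - C ω) * hX0
  -- level 1 identity
  have hL1 : (4*tβ 2 - 2*tβ 1 - (3*β 3 - β 2 - ω)) = 0 ∧
      (4*tγ 2 - 2*tγ 1 - (2*γ 3 + 2*(β 2 - tβ 1)*(β 2 - tβ 1 - ω))) = 0 ∧
      (2*tγ 1*(2*β 2 - tβ 1 - tβ 0 - ω) - γ 2*(β 2 + β 1 - 2*tβ 0 - ω)) = 0 := by
    refine indep3 hQm (k := 0) ?_
    have hrec := hPr.2.2 1
    have hP3 := hE 1
    have hP2 := hE 0
    have hT1 := hQr.2.2 1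
    have hT0 := hQr.2.2 0
    push_cast at hP3 hP2
    simp only [map_sub, map_add, map_mul, map_neg, map_one, map_zero, map_ofNat, Nat.reduceAdd]
      at hrec hP3 hP2 hT1 hT0 hE0 hX0 ⊢
    linear_combination -hrec + hP3 - (X - C (β 2)) * hP2 + C (γ 2) * hE0 + hT1
      + 2 * (C (β 2) - C (tβ 1) - C ω) * hT0 - (C (γ 2) - 2 * C (tγ 1)) * hX0
  -- general level identity (level k+2)
  have hLg : ∀ k : ℕ,
      (((k:ℂ)+5)*tβ (k+3) - ((k:ℂ)+3)*tβ (k+2)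
        - (((k:ℂ)+4)*β (k+4) - ((k:ℂ)+2)*β (k+3) - ω)) = 0 ∧
      (((k:ℂ)+5)*tγ (k+3) - ((k:ℂ)+3)*tγ (k+2)
        - (((k:ℂ)+3)*γ (k+4) - ((k:ℂ)+1)*γ (k+3)
          + ((k:ℂ)+3)*(β (k+3) - tβ (k+2))*(β (k+3) - tβ (k+2) - ω))) = 0 ∧
      (((k:ℂ)+3)*tγ (k+2)*(2*β (k+3) - tβ (k+2) - tβ (k+1) - ω)
        - ((k:ℂ)+2)*γ (k+3)*(β (k+3) + β (k+2) - 2*tβ (k+1) - ω)) = 0 ∧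
      (-(((k:ℂ)+3)*tγ (k+1)*tγ (k+2) - 2*((k:ℂ)+2)*tγ (k+1)*γ (k+3)
        + ((k:ℂ)+1)*γ (k+2)*γ (k+3))) = 0 := by
    intro k
    refine indep4 hQm (k := k) ?_
    have hrec := hPr.2.2 (k+2)
    have hE2 := hE (k+2)
    have hE1 := hE (k+1)
    have hE0' := hE k
    have hT2 := hQr.2.2 (k+2)
    have hT1 := hQr.2.2 (k+1)
    have hT0 := hQr.2.2 k
    push_cast at hE2 hE1 hE0'
    simp only [map_sub, map_add, map_mul, map_neg, map_one, map_zero, map_ofNat, Nat.reduceAdd]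
      at hrec hE2 hE1 hE0' hT2 hT1 hT0 ⊢
    linear_combination -hrec + hE2 - (X - C (β (k+3))) * hE1 + C (γ (k+3)) * hE0'
      + hT2 + (C ((k:ℂ)) + 3) * (C (β (k+3)) - C (tβ (k+2)) - C ω) * hT1
      + ((C ((k:ℂ)) + 2) * C (γ (k+3)) - (C ((k:ℂ)) + 3) * C (tγ (k+2))) * hT0
  refine ⟨?_, heq2, ?_, ?_, ?_, ?_⟩
  · -- equation (1)
    intro n hn
    match n, hn with
    | 1, _ => push_cast; linear_combination hL0.1
    | 2, _ => push_cast; linear_combination hL1.1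
    | (k+3), _ =>
      have hs : k + 3 - 1 = k + 2 := by omega
      rw [hs]; push_cast; linear_combination (hLg k).1
  · -- equation (3)
    intro n hn
    match n, hn with
    | 1, _ => push_cast; linear_combination hL1.2.1
    | (k+2), _ => push_cast; linear_combination (hLg k).2.1
  · -- equation (4)
    linear_combination hL0.2
  · -- equation (5)
    intro n hn
    match n, hn with
    | 1, _ => push_cast; linear_combination hL1.2.2
    | (k+2), _ =>
      have hs : k + 2 - 1 = k + 1 := by omega
      rw [hs]; push_cast; linear_combination (hLg k).2.2.1
  · -- equation (6)
    intro n hn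
    match n, hn with
    | (k+1), _ => push_cast; linear_combination -(hLg k).2.2.2
end

section
/- Let {P_n}_{n≥0} be a monic PS and, for k ≥ 1, define P^{[0]}_n := P_n and P^{[k]}_n := (n+1)^{-1} D_ω P^{[k−1]}_{n+1}. Suppose that for every k ≥ 0 the monic PS {P^{[k]}_n}_{n≥0} satisfies the three-term recurrence with coefficients (β^{[k]}_n), (γ^{[k]}_{n+1}), and that γ_m := γ^{[0]}_m ≠ 0 for all m ≥ 1. Define δ_n := β^{[1]}_n − β_{n+1} for n ≥ 0 and θ_n := (n+1)γ^{[1]}_n/(n γ_{n+1}) for n ≥ 1 (where β_n := β^{[0]}_n), and for k ≥ 1 set α^{k,1}_n := (n+1)(β^{[k−1]}_{n+1} − β^{[k]}_n − ω) and α^{k,0}_n := (n+1)γ^{[k−1]}_{n+2} − (n+2)γ^{[k]}_{n+1}. Then for every k ≥ 1 and every n ≥ 0: α^{k,1}_n = −(n+1)(δ_{n+k−1} + ω) and α^{k,0}_n = ((n+1)(n+2)/(n+k+1))·γ_{n+k+1}·(1 − θ_{n+k}). -/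
open Polynomial

/-!
Write `A_k(m)` and `B_k(m)` (`normCoeff₁`, `normCoeff₂`) for the coefficients of `X ^ (m - 1)` and
`X ^ (m - 2)` in `P^[k]_m`, divided by `m` and `m (m - 1)`. Comparing top coefficients in
`D_ω` gives `A_{k+1}(m) = A_k(m+1) + ω/2` and `B_{k+1}(m) = B_k(m+1) + (ω/2) A_k(m+1) + ω²/6`,
while the recurrence expresses `β^[k]_m` and `γ^[k]_m / m` through `A_k` and `B_k`. In these terms
`β^[k+1]_n - β^[k]_{n+1}` and `γ^[k]_{n+2}/(n+2) - γ^[k+1]_{n+1}/(n+1)` are expressions in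
`A_k, B_k` at `n+1, n+2, n+3` that do not change under `(k, n) ↦ (k+1, n-1)`, so they depend on
`n + k` only; at `k = 0` they are `δ_n` and `γ_{n+2} (1 - θ_{n+1}) / (n + 2)`.
-/

lemma coeff_taylor_eq_sum {R : Type*} [CommSemiring R] (r : R) (f : R[X]) (m d : ℕ)
    (hf : f.natDegree ≤ m + d) :
    (taylor r f).coeff m
      = ∑ i ∈ Finset.range (d + 1), ((m + i).choose m : R) * r ^ i * f.coeff (m + i) := by
  rw [taylor_coeff, eval_eq_sum_range' (n := d + 1)
    ((natDegree_hasseDeriv_le f m).trans_lt (by omega))]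
  refine Finset.sum_congr rfl fun i _ => ?_
  rw [hasseDeriv_coeff, add_comm i m]
  ring

lemma coeff_Dw {ω : ℂ} (hω : ω ≠ 0) (f : ℂ[X]) (m : ℕ) (hf : f.natDegree ≤ m + 3) :
    (Dw ω f).coeff m = (m + 1) * f.coeff (m + 1)
      + (m + 1) * (m + 2) / 2 * ω * f.coeff (m + 2)
      + (m + 1) * (m + 2) * (m + 3) / 6 * ω ^ 2 * f.coeff (m + 3) := by
  have choose_two : ((m + 2).choose m : ℂ) = (m + 1) * (m + 2) / 2 := by
    rw [Nat.cast_add_choose]; push_cast [Nat.factorial_succ]; field_simp [Nat.factorial_ne_zero]; ring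
  have choose_three : ((m + 3).choose m : ℂ) = (m + 1) * (m + 2) * (m + 3) / 6 := by
    rw [Nat.cast_add_choose]; push_cast [Nat.factorial_succ]; field_simp [Nat.factorial_ne_zero]; ring
  rw [Dw, coeff_C_mul, coeff_sub, ← taylor_apply, coeff_taylor_eq_sum ω f m 3 hf]
  simp only [Finset.sum_range_succ, Finset.sum_range_zero, add_zero, zero_add, choose_two,
    choose_three, Nat.choose_self, Nat.choose_succ_self_right]
  field_simp
  push_cast
  ring

noncomputable def normCoeff₁ (p : ℂ[X]) : ℂ :=
  p.nextCoeff / p.natDegree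

noncomputable def normCoeff₂ (p : ℂ[X]) : ℂ :=
  p.coeff (p.natDegree - 2) / ((p.natDegree : ℂ) * (p.natDegree - 1))

lemma coeff_eq_mul_normCoeff₁ {p : ℂ[X]} {n : ℕ} (hp : p.natDegree = n + 1) :
    p.coeff n = (n + 1) * normCoeff₁ p := by
  rw [normCoeff₁, nextCoeff_of_natDegree_pos (by omega), hp, Nat.add_sub_cancel]
  push_cast
  field_simp

lemma coeff_eq_mul_normCoeff₂ {p : ℂ[X]} {n : ℕ} (hp : p.natDegree = n + 2) :
    p.coeff n = (n + 2) * (n + 1) * normCoeff₂ p := by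
  rw [normCoeff₂, hp, Nat.add_sub_cancel]
  push_cast
  rw [show (n : ℂ) + 2 - 1 = n + 1 by ring]
  have h2 : (n : ℂ) + 2 ≠ 0 := by exact_mod_cast (by omega : n + 2 ≠ 0)
  field_simp

lemma MonicPS.coeff_self {P : ℕ → ℂ[X]} (hP : MonicPS P) (n : ℕ) : (P n).coeff n = 1 := by
  simpa [(hP n).2] using (hP n).1.coeff_natDegree

lemma MonicPS.coeff_succ {P : ℕ → ℂ[X]} (hP : MonicPS P) (n : ℕ) : (P n).coeff (n + 1) = 0 :=
  coeff_eq_zero_of_natDegree_lt (by rw [(hP n).2]; omega)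

namespace TTR

variable {P : ℕ → ℂ[X]} {β γ : ℕ → ℂ}

lemma coeff_succ_succ (h : TTR P β γ) (n i : ℕ) :
    (P (n + 2)).coeff (i + 1)
      = (P (n + 1)).coeff i - β (n + 1) * (P (n + 1)).coeff (i + 1)
        - γ (n + 1) * (P n).coeff (i + 1) := by
  rw [h.2.2 n, sub_mul, coeff_sub, coeff_sub, coeff_X_mul, coeff_C_mul, coeff_C_mul]

lemma beta_eq (hP : MonicPS P) (h : TTR P β γ) (n : ℕ) :
    β n = n * normCoeff₁ (P n) - (n + 1) * normCoeff₁ (P (n + 1)) := by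
  rcases n with _ | n
  · have h1 : (P 1).coeff 0 = -β 0 := by simp [h.2.1]
    rw [coeff_eq_mul_normCoeff₁ (hP 1).2] at h1
    push_cast at h1 ⊢
    linear_combination h1
  · have e := h.coeff_succ_succ n n
    rw [hP.coeff_self, hP.coeff_succ, coeff_eq_mul_normCoeff₁ (hP (n + 2)).2,
      coeff_eq_mul_normCoeff₁ (hP (n + 1)).2] at e
    push_cast at e ⊢
    linear_combination e

lemma gamma_div_eq (hP : MonicPS P) (h : TTR P β γ) (n : ℕ) :
    γ (n + 1) / (n + 1 : ℕ) = n * normCoeff₂ (P (n + 1)) - (n + 2) * normCoeff₂ (P (n + 2))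
      - β (n + 1) * normCoeff₁ (P (n + 1)) := by
  rw [div_eq_iff (Nat.cast_ne_zero.mpr n.succ_ne_zero)]
  rcases n with _ | n
  · have e : (P 2).coeff 0 = -β 1 * (P 1).coeff 0 - γ 1 * (P 0).coeff 0 := by
      rw [h.2.2 0, sub_mul, coeff_sub, coeff_sub, coeff_X_mul_zero, coeff_C_mul, coeff_C_mul]
      ring
    rw [h.1, coeff_eq_mul_normCoeff₂ (hP 2).2, coeff_eq_mul_normCoeff₁ (n := 0) (hP 1).2] at e
    simp only [coeff_one_zero] at e
    push_cast at e ⊢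
    linear_combination e
  · have e := h.coeff_succ_succ (n + 1) n
    rw [hP.coeff_self, coeff_eq_mul_normCoeff₂ (hP (n + 3)).2,
      coeff_eq_mul_normCoeff₂ (hP (n + 2)).2, coeff_eq_mul_normCoeff₁ (hP (n + 2)).2] at e
    push_cast at e ⊢
    linear_combination e

end TTR

section DerivedSequence

variable {ω : ℂ} {P Q : ℕ → ℂ[X]} {β γ β' γ' : ℕ → ℂ}

lemma normCoeff₁_derived (hω : ω ≠ 0) (hP : MonicPS P) (hQ : ∀ n, (Q n).natDegree = n)
    (hQP : ∀ n, Q n = ((n : ℂ) + 1)⁻¹ • Dw ω (P (n + 1))) (n : ℕ) :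
    normCoeff₁ (Q (n + 1)) = normCoeff₁ (P (n + 2)) + ω / 2 := by
  have e := congrArg (coeff · n) (hQP (n + 1))
  simp only [coeff_smul, smul_eq_mul] at e
  rw [coeff_Dw hω _ n (by rw [(hP _).2]; omega), hP.coeff_self, hP.coeff_succ,
    coeff_eq_mul_normCoeff₁ (hQ _), coeff_eq_mul_normCoeff₁ (hP (n + 2)).2] at e
  push_cast at e
  have h2 : (n : ℂ) + 1 + 1 ≠ 0 := by exact_mod_cast (by omega : n + 2 ≠ 0)
  apply mul_left_cancel₀ (Nat.cast_add_one_ne_zero n)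
  rw [e]
  field_simp
  ring

lemma normCoeff₂_derived (hω : ω ≠ 0) (hP : MonicPS P) (hQ : ∀ n, (Q n).natDegree = n)
    (hQP : ∀ n, Q n = ((n : ℂ) + 1)⁻¹ • Dw ω (P (n + 1))) (n : ℕ) :
    normCoeff₂ (Q (n + 2))
      = normCoeff₂ (P (n + 3)) + ω / 2 * normCoeff₁ (P (n + 3)) + ω ^ 2 / 6 := by
  have e := congrArg (coeff · n) (hQP (n + 2))
  simp only [coeff_smul, smul_eq_mul] at e
  rw [coeff_Dw hω _ n (by rw [(hP _).2]), hP.coeff_self,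
    coeff_eq_mul_normCoeff₂ (hQ _), coeff_eq_mul_normCoeff₂ (hP (n + 3)).2,
    coeff_eq_mul_normCoeff₁ (hP (n + 3)).2] at e
  push_cast at e
  have h1 : (n : ℂ) + 1 ≠ 0 := by exact_mod_cast (by omega : n + 1 ≠ 0)
  have h2 : (n : ℂ) + 2 ≠ 0 := by exact_mod_cast (by omega : n + 2 ≠ 0)
  have h3 : (n : ℂ) + 2 + 1 ≠ 0 := by exact_mod_cast (by omega : n + 3 ≠ 0)
  apply mul_left_cancel₀ (mul_ne_zero h2 h1)
  rw [e]
  field_simp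
  ring

lemma beta_diff_eq (hω : ω ≠ 0) (hP : MonicPS P) (hQ : MonicPS Q)
    (hQP : ∀ n, Q n = ((n : ℂ) + 1)⁻¹ • Dw ω (P (n + 1)))
    (hPβ : TTR P β γ) (hQβ : TTR Q β' γ') (n : ℕ) :
    β' n - β (n + 1) = normCoeff₁ (P (n + 2)) - normCoeff₁ (P (n + 1)) - ω / 2 := by
  have shift := normCoeff₁_derived hω hP (fun n ↦ (hQ n).2) hQP
  rw [hQβ.beta_eq hQ, hPβ.beta_eq hP, shift n]
  rcases n with _ | n
  · simp
    ring
  · rw [shift n]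
    push_cast
    ring

lemma gamma_diff_eq (hω : ω ≠ 0) (hP : MonicPS P) (hQ : MonicPS Q)
    (hQP : ∀ n, Q n = ((n : ℂ) + 1)⁻¹ • Dw ω (P (n + 1)))
    (hPβ : TTR P β γ) (hQβ : TTR Q β' γ') (n : ℕ) :
    γ (n + 2) / (n + 2 : ℕ) - γ' (n + 1) / (n + 1 : ℕ)
      = normCoeff₂ (P (n + 2)) - normCoeff₂ (P (n + 3))
        + normCoeff₁ (P (n + 2)) * (normCoeff₁ (P (n + 3)) - normCoeff₁ (P (n + 2)))
        + ω ^ 2 / 12 := by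
  have shift₁ := normCoeff₁_derived hω hP (fun n ↦ (hQ n).2) hQP
  have shift₂ := normCoeff₂_derived hω hP (fun n ↦ (hQ n).2) hQP
  have shift₂' : (n : ℂ) * normCoeff₂ (Q (n + 1))
      = n * (normCoeff₂ (P (n + 2)) + ω / 2 * normCoeff₁ (P (n + 2)) + ω ^ 2 / 6) := by
    rcases n with _ | n
    · simp
    · rw [shift₂ n]
  rw [show n + 2 = n + 1 + 1 from rfl, hPβ.gamma_div_eq hP, hQβ.gamma_div_eq hQ, shift₂',
    hPβ.beta_eq hP, hQβ.beta_eq hQ, shift₁ n, shift₁ (n + 1), shift₂ n]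
  push_cast
  ring

end DerivedSequence

section Tower

variable {ω : ℂ} {Pk : ℕ → ℕ → ℂ[X]} {βk γk : ℕ → ℕ → ℂ}

lemma beta_diff_succ (hω : ω ≠ 0) (hmonic : ∀ k, MonicPS (Pk k))
    (hrec : ∀ k n : ℕ, Pk (k + 1) n = ((n : ℂ) + 1)⁻¹ • Dw ω (Pk k (n + 1)))
    (hTTR : ∀ k, TTR (Pk k) (βk k) (γk k)) (j n : ℕ) :
    βk (j + 2) n - βk (j + 1) (n + 1) = βk (j + 1) (n + 1) - βk j (n + 2) := by
  have shift := normCoeff₁_derived hω (hmonic j) (fun n ↦ (hmonic (j + 1) n).2) (hrec j)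
  rw [beta_diff_eq hω (hmonic _) (hmonic _) (hrec _) (hTTR _) (hTTR _),
    beta_diff_eq hω (hmonic _) (hmonic _) (hrec _) (hTTR _) (hTTR _), shift, shift]
  ring

lemma gamma_diff_succ (hω : ω ≠ 0) (hmonic : ∀ k, MonicPS (Pk k))
    (hrec : ∀ k n : ℕ, Pk (k + 1) n = ((n : ℂ) + 1)⁻¹ • Dw ω (Pk k (n + 1)))
    (hTTR : ∀ k, TTR (Pk k) (βk k) (γk k)) (j n : ℕ) :
    γk (j + 1) (n + 2) / (n + 2 : ℕ) - γk (j + 2) (n + 1) / (n + 1 : ℕ)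
      = γk j (n + 3) / (n + 3 : ℕ) - γk (j + 1) (n + 2) / (n + 2 : ℕ) := by
  have shift₁ := normCoeff₁_derived hω (hmonic j) (fun n ↦ (hmonic (j + 1) n).2) (hrec j)
  have shift₂ := normCoeff₂_derived hω (hmonic j) (fun n ↦ (hmonic (j + 1) n).2) (hrec j)
  rw [gamma_diff_eq hω (hmonic _) (hmonic _) (hrec _) (hTTR _) (hTTR _),
    gamma_diff_eq hω (hmonic _) (hmonic _) (hrec _) (hTTR _) (hTTR _), shift₁, shift₁, shift₂, shift₂]
  ring

end Tower

theorem eq_apply_zero_add_of_shift {α : Type*} {f : ℕ → ℕ → α}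
    (h : ∀ j n, f (j + 1) n = f j (n + 1)) (j n : ℕ) : f j n = f 0 (n + j) := by
  induction j generalizing n with
  | zero => rfl
  | succ j ih => rw [h, ih, Nat.add_right_comm]; rfl

theorem higher_order_structure_relation_coefficients
    (ω : ℂ) (hω : ω ≠ 0) (Pk : ℕ → ℕ → Polynomial ℂ)
    (hmonic : ∀ k, MonicPS (Pk k))
    (hrec : ∀ k n : ℕ, Pk (k + 1) n = ((n : ℂ) + 1)⁻¹ • Dw ω (Pk k (n + 1)))
    (βk γk : ℕ → ℕ → ℂ)
    (hTTR : ∀ k, TTR (Pk k) (βk k) (γk k))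
    (hγ : ∀ m : ℕ, 1 ≤ m → γk 0 m ≠ 0)
    (δ θ : ℕ → ℂ)
    (hδ : ∀ n : ℕ, δ n = βk 1 n - βk 0 (n + 1))
    (hθ : ∀ n : ℕ, 1 ≤ n →
        θ n = ((n : ℂ) + 1) * γk 1 n / ((n : ℂ) * γk 0 (n + 1)))
    (α1 α0 : ℕ → ℕ → ℂ)
    (hα1 : ∀ k n : ℕ, 1 ≤ k →
        α1 k n = ((n : ℂ) + 1) * (βk (k - 1) (n + 1) - βk k n - ω))
    (hα0 : ∀ k n : ℕ, 1 ≤ k →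
        α0 k n = ((n : ℂ) + 1) * γk (k - 1) (n + 2) - ((n : ℂ) + 2) * γk k (n + 1)) :
    ∀ k n : ℕ, 1 ≤ k →
      α1 k n = -((n : ℂ) + 1) * (δ (n + k - 1) + ω) ∧
      α0 k n = (((n : ℂ) + 1) * ((n : ℂ) + 2) / ((n : ℂ) + (k : ℂ) + 1))
        * γk 0 (n + k + 1) * (1 - θ (n + k)) := by
  intro k n hk
  obtain ⟨j, rfl⟩ := Nat.exists_eq_add_of_le' hk
  have hβ := eq_apply_zero_add_of_shift (f := fun j n ↦ βk (j + 1) n - βk j (n + 1))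
    (beta_diff_succ hω hmonic hrec hTTR) j n
  have hΓ := eq_apply_zero_add_of_shift
    (f := fun j n ↦ γk j (n + 2) / (n + 2 : ℕ) - γk (j + 1) (n + 1) / (n + 1 : ℕ))
    (gamma_diff_succ hω hmonic hrec hTTR) j n
  rw [hα1 _ _ hk, hα0 _ _ hk, Nat.add_sub_cancel, show n + (j + 1) - 1 = n + j by omega, hδ,
    show n + (j + 1) = n + j + 1 by omega, hθ _ (by omega)]
  have hγ₀ := hγ (n + j + 2) (by omega)
  push_cast at hβ hΓ ⊢
  refine ⟨by linear_combination (-(n + 1) : ℂ) * hβ, ?_⟩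
  have h₁ : (n : ℂ) + j + 1 ≠ 0 := by exact_mod_cast (by omega : n + j + 1 ≠ 0)
  have h₂ : (n : ℂ) + j + 2 ≠ 0 := by exact_mod_cast (by omega : n + j + 2 ≠ 0)
  have h₃ : (n : ℂ) + 2 ≠ 0 := by exact_mod_cast (by omega : n + 2 ≠ 0)
  rw [show (n : ℂ) + (j + 1) + 1 = n + j + 2 by ring, show (n : ℂ) + j + 1 + 1 = n + j + 2 by ring]
  field_simp at hΓ ⊢
  linear_combination hΓ
end
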